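/- arXiv:math/0109020 — 5 statements merged into one kernel-verified Lean document; each statement's English description precedes it below -/
import Mathlib

section
/- Let Λ : P(V) → ℕ be a hypergraph on a finite vertex set V. If v₁, v₂, … and v₁′, v₂′, … are two maximal sequences of permitted collapses (each step removes a vertex carrying at least one patch, where removing v replaces Λ by Λ′ with Λ′(A) = Λ(A) + Λ(A ∪ {v}) for v ∉ A and Λ′(A) = 0 for v ∈ A, and a sequence is maximal when the resulting hypergraph has no patches), then the two sequences remove exactly the same set of vertices. In particular, the set V* of identifiable vertices does not depend on the order of collapse. -/
/-- Removing vertex `v` from the hypergraph `Λ`. -/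
def collapseAt {V : Type*} [DecidableEq V] (Λ : Finset V → ℕ) (v : V) :
    Finset V → ℕ :=
  fun A => if v ∈ A then 0 else Λ A + Λ (insert v A)

/-- The hypergraph obtained after the sequence of vertex removals `l`. -/
def collapseList {V : Type*} [DecidableEq V] (Λ : Finset V → ℕ) :
    List V → (Finset V → ℕ)
  | [] => Λ
  | v :: l => collapseList (collapseAt Λ v) l

/-- `l` is a sequence of permitted collapses: each selected vertex carries a patch
at the time of its removal. -/
def IsPermittedSeq {V : Type*} [DecidableEq V] (Λ : Finset V → ℕ) :
    List V → Prop
  | [] => True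
  | v :: l => 1 ≤ Λ {v} ∧ IsPermittedSeq (collapseAt Λ v) l

/-- A hypergraph is stable when it carries no patches. -/
def IsStable {V : Type*} (Λ : Finset V → ℕ) : Prop := ∀ v : V, Λ {v} = 0

/-- A maximal sequence of permitted collapses: permitted at every step, and the
resulting hypergraph has no patches. -/
def IsMaximalSeq {V : Type*} [DecidableEq V] (Λ : Finset V → ℕ) (l : List V) : Prop :=
  IsPermittedSeq Λ l ∧ IsStable (collapseList Λ l)

/-!
Collapsing the vertices of `s`, in any order and with repetitions, yields the hypergraph
`A ↦ ∑_{S ⊆ s} Λ (A ∪ S)` on sets `A` disjoint from `s` (and `0` on the others). This value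
only grows with `s`, so a vertex carrying a patch after collapsing a subset of the vertices
removed by a maximal sequence still carries one after collapsing all of them; by stability
it was removed. Hence each maximal sequence removes only vertices removed by the other.
-/

section CollapseSet

variable {V : Type*} [DecidableEq V]

def collapseSet (Λ : Finset V → ℕ) (s : Finset V) : Finset V → ℕ :=
  fun A => if Disjoint s A then ∑ S ∈ s.powerset, Λ (A ∪ S) else 0

@[simp]
lemma collapseSet_empty (Λ : Finset V → ℕ) : collapseSet Λ ∅ = Λ := by
  funext A
  simp [collapseSet]

lemma collapseAt_collapseSet (Λ : Finset V → ℕ) (s : Finset V) (v : V) :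
    collapseAt (collapseSet Λ s) v = collapseSet Λ (insert v s) := by
  funext A
  by_cases hvA : v ∈ A
  · simp [collapseAt, collapseSet, hvA]
  by_cases hvs : v ∈ s
  · simp [collapseAt, collapseSet, hvA, hvs, Finset.insert_eq_of_mem]
  by_cases hsA : Disjoint s A
  · simp only [collapseAt, collapseSet, hvA, hsA, hvs, Finset.disjoint_insert_left,
      Finset.disjoint_insert_right, not_false_eq_true, and_self, if_true, if_false,
      Finset.sum_powerset_insert hvs, Finset.union_insert, Finset.insert_union]
  · simp [collapseAt, collapseSet, hvA, hsA]

lemma collapseList_collapseSet (Λ : Finset V → ℕ) (s : Finset V) (l : List V) :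
    collapseList (collapseSet Λ s) l = collapseSet Λ (s ∪ l.toFinset) := by
  induction l generalizing s with
  | nil => simp [collapseList]
  | cons v l ih =>
    rw [collapseList, collapseAt_collapseSet, ih, List.toFinset_cons, Finset.insert_union,
      Finset.union_insert]

lemma collapseList_eq_collapseSet (Λ : Finset V → ℕ) (l : List V) :
    collapseList Λ l = collapseSet Λ l.toFinset := by
  simpa using collapseList_collapseSet Λ ∅ l

lemma collapseSet_mono {Λ : Finset V → ℕ} {s t A : Finset V} (hst : s ⊆ t)
    (htA : Disjoint t A) : collapseSet Λ s A ≤ collapseSet Λ t A := by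
  simp only [collapseSet, htA, htA.mono_left hst, if_true]
  exact Finset.sum_le_sum_of_subset (Finset.powerset_mono.mpr hst)

lemma mem_of_collapseSet_singleton_pos {Λ : Finset V → ℕ} {s t : Finset V} {v : V}
    (hst : s ⊆ t) (ht : IsStable (collapseSet Λ t)) (hv : 1 ≤ collapseSet Λ s {v}) :
    v ∈ t := by
  by_contra hvt
  have := collapseSet_mono hst (Finset.disjoint_singleton_right.mpr hvt) (Λ := Λ)
  rw [ht v] at this
  omega

lemma toFinset_subset_of_isPermittedSeq_collapseSet {Λ : Finset V → ℕ} {t : Finset V}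
    (ht : IsStable (collapseSet Λ t)) {s : Finset V} (hst : s ⊆ t) {l : List V}
    (hl : IsPermittedSeq (collapseSet Λ s) l) : l.toFinset ⊆ t := by
  induction l generalizing s with
  | nil => simp
  | cons v l ih =>
    obtain ⟨hv, hl⟩ := hl
    have hvt : v ∈ t := mem_of_collapseSet_singleton_pos hst ht hv
    rw [collapseAt_collapseSet] at hl
    rw [List.toFinset_cons]
    exact Finset.insert_subset hvt (ih (Finset.insert_subset hvt hst) hl)

lemma IsMaximalSeq.toFinset_subset_of_isPermittedSeq {Λ : Finset V → ℕ}
    {l₁ l₂ : List V} (h₂ : IsMaximalSeq Λ l₂) (h₁ : IsPermittedSeq Λ l₁) :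
    l₁.toFinset ⊆ l₂.toFinset := by
  rw [IsMaximalSeq, collapseList_eq_collapseSet] at h₂
  rw [← collapseSet_empty Λ] at h₁
  exact toFinset_subset_of_isPermittedSeq_collapseSet h₂.2 (Finset.empty_subset _) h₁

end CollapseSet

theorem maximalSeq_toFinset_eq_general {V : Type*} [DecidableEq V]
    (Λ : Finset V → ℕ) (l₁ l₂ : List V)
    (h₁ : IsMaximalSeq Λ l₁) (h₂ : IsMaximalSeq Λ l₂) :
    l₁.toFinset = l₂.toFinset :=
  (h₂.toFinset_subset_of_isPermittedSeq h₁.1).antisymm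
    (h₁.toFinset_subset_of_isPermittedSeq h₂.1)

/-- Any two maximal sequences of permitted collapses remove exactly the same set of
vertices: the set `V*` of identifiable vertices does not depend on the order of collapse. -/
theorem maximalSeq_toFinset_eq {V : Type*} [Fintype V] [DecidableEq V]
    (Λ : Finset V → ℕ) (l₁ l₂ : List V)
    (h₁ : IsMaximalSeq Λ l₁) (h₂ : IsMaximalSeq Λ l₂) :
    l₁.toFinset = l₂.toFinset :=
  maximalSeq_toFinset_eq_general Λ l₁ l₂ h₁ h₂
end

section
/- After fully collapsing a hypergraph Λ (removing identifiable vertices until no patches remain), the amount of debris of the terminal stable hypergraph Λ∞ equals the total number of identifiable hyperedges: Λ∞(∅) = |Λ*|, where Λ*(A) = Λ(A)·1_{A ⊆ V*}. -/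
section Collapse

variable {V : Type*} [DecidableEq V]

theorem collapseAt_of_mem {Λ : Finset V → ℕ} {v : V} {A : Finset V} (hA : v ∈ A) :
    collapseAt Λ v A = 0 :=
  if_pos hA

theorem collapseAt_of_notMem {Λ : Finset V → ℕ} {v : V} {A : Finset V} (hA : v ∉ A) :
    collapseAt Λ v A = Λ A + Λ (insert v A) :=
  if_neg hA

theorem collapseAt_eq_zero_of_forall_mem {Λ : Finset V → ℕ} {v : V}
    (h : ∀ A, v ∈ A → Λ A = 0) (w : V) : ∀ A, v ∈ A → collapseAt Λ w A = 0 := by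
  intro A hA
  by_cases hw : w ∈ A
  · exact collapseAt_of_mem hw
  · rw [collapseAt_of_notMem hw, h A hA, h _ (Finset.mem_insert_of_mem hA)]

theorem IsPermittedSeq.notMem_of_forall_mem_eq_zero {Λ : Finset V → ℕ} {v : V} {l : List V}
    (hl : IsPermittedSeq Λ l) (h : ∀ A, v ∈ A → Λ A = 0) : v ∉ l := by
  induction l generalizing Λ with
  | nil => simp
  | cons w l ih =>
    obtain ⟨hw, hl⟩ := hl
    rw [List.mem_cons, not_or]
    refine ⟨?_, ih hl (collapseAt_eq_zero_of_forall_mem h w)⟩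
    rintro rfl
    have := h {v} (Finset.mem_singleton_self v)
    omega

theorem IsPermittedSeq.nodup {Λ : Finset V → ℕ} {l : List V} (hl : IsPermittedSeq Λ l) :
    l.Nodup := by
  induction l generalizing Λ with
  | nil => exact List.nodup_nil
  | cons v l ih =>
    obtain ⟨-, hl⟩ := hl
    exact List.nodup_cons.mpr
      ⟨hl.notMem_of_forall_mem_eq_zero fun _ => collapseAt_of_mem, ih hl⟩

theorem collapseList_eq_sum_powerset (Λ : Finset V → ℕ) {l : List V} (hl : l.Nodup)
    {A : Finset V} (hA : ∀ v ∈ l, v ∉ A) :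
    collapseList Λ l A = ∑ B ∈ l.toFinset.powerset, Λ (A ∪ B) := by
  induction l generalizing Λ with
  | nil => simp [collapseList]
  | cons v l ih =>
    obtain ⟨hv, hl⟩ := List.nodup_cons.mp hl
    have hvl : v ∉ l.toFinset := List.mem_toFinset.not.mpr hv
    have hvA : v ∉ A := hA v List.mem_cons_self
    have expand : ∀ B ∈ l.toFinset.powerset,
        collapseAt Λ v (A ∪ B) = Λ (A ∪ B) + Λ (A ∪ insert v B) := by
      intro B hB
      have hvB : v ∉ A ∪ B := by
        rw [Finset.mem_union, not_or]
        exact ⟨hvA, fun h => hvl (Finset.mem_powerset.mp hB h)⟩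
      rw [collapseAt_of_notMem hvB, Finset.union_insert]
    calc collapseList Λ (v :: l) A
        = ∑ B ∈ l.toFinset.powerset, collapseAt Λ v (A ∪ B) :=
          ih _ hl fun w hw => hA w (List.mem_cons_of_mem v hw)
      _ = ∑ B ∈ l.toFinset.powerset, Λ (A ∪ B)
            + ∑ B ∈ l.toFinset.powerset, Λ (A ∪ insert v B) := by
          rw [Finset.sum_congr rfl expand, Finset.sum_add_distrib]
      _ = ∑ B ∈ (v :: l).toFinset.powerset, Λ (A ∪ B) := by
          rw [List.toFinset_cons, Finset.sum_powerset_insert hvl]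

end Collapse

/-- The debris of the terminal stable hypergraph `Λ∞` equals the total number of
identifiable hyperedges: `Λ∞(∅) = |Λ*|`, where `Λ*(A) = Λ(A) · 1_{A ⊆ V*}` and `V*`
is the set of removed vertices. -/
theorem debris_eq_identifiable_hyperedges {V : Type*} [Fintype V] [DecidableEq V]
    (Λ : Finset V → ℕ) (l : List V) (h : IsMaximalSeq Λ l) :
    collapseList Λ l ∅ = ∑ A : Finset V, (if A ⊆ l.toFinset then Λ A else 0) := by
  rw [collapseList_eq_sum_powerset Λ h.1.nodup (by simp), ← Finset.sum_filter,
    Finset.filter_subset_univ]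
  simp only [Finset.empty_union]
end

section
/- Let z*(p,α) ∈ [0,1) be the unique root of α·t + log(1−t) = log(1−p) for p ∈ (0,1), α > 0. Then for fixed 0 < α < 1, z*(p,α)/p → 1/(1−α) as p → 0⁺. -/
open Real Filter Topology

/-! Exponentiating the equation gives `p = h (z p)` with `h t = 1 - (1 - t) * exp (α * t)`, and
`h' 0 = 1 - α ≠ 0`, so `z p / p = z p / h (z p) → 1 / (1 - α)` as soon as `z p → 0⁺`. That
follows from `log (1 - t) ≤ -t`, which squeezes `0 ≤ z p ≤ -log (1 - p) / (1 - α)`. -/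

theorem le_neg_log_one_sub_div {α p t : ℝ} (hα : α < 1) (ht : t < 1)
    (heq : α * t + log (1 - t) = log (1 - p)) : t ≤ -log (1 - p) / (1 - α) := by
  have hlog : log (1 - t) ≤ -t := by linarith [log_le_sub_one_of_pos (sub_pos.2 ht)]
  rw [le_div_iff₀ (sub_pos.2 hα)]
  linarith

theorem ne_zero_of_add_log_eq_log {α p t : ℝ} (hp : p ∈ Set.Ioo (0 : ℝ) 1)
    (heq : α * t + log (1 - t) = log (1 - p)) : t ≠ 0 := by
  rintro rfl
  have : log (1 - p) < 0 := log_neg (by linarith [hp.2]) (by linarith [hp.1])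
  simp only [mul_zero, sub_zero, log_one, add_zero] at heq
  linarith

theorem one_sub_mul_exp_eq {α p t : ℝ} (hp : p < 1) (ht : t < 1)
    (heq : α * t + log (1 - t) = log (1 - p)) : 1 - (1 - t) * exp (α * t) = p := by
  have := congrArg exp heq
  rw [exp_add, exp_log (sub_pos.2 ht), exp_log (sub_pos.2 hp)] at this
  linarith

theorem hasDerivAt_one_sub_mul_exp (α : ℝ) :
    HasDerivAt (fun t => 1 - (1 - t) * exp (α * t)) (1 - α) 0 := by
  have hexp : HasDerivAt (fun t => exp (α * t)) α 0 := by
    simpa using ((hasDerivAt_id (0 : ℝ)).const_mul α).exp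
  have h := (((hasDerivAt_id (0 : ℝ)).const_sub 1).mul hexp).const_sub 1
  simp only [id, mul_zero, exp_zero, sub_zero] at h
  exact h.congr_deriv (by ring)

theorem HasDerivAt.tendsto_self_div {h : ℝ → ℝ} {c : ℝ} (hd : HasDerivAt h c 0) (h0 : h 0 = 0)
    (hc : c ≠ 0) : Tendsto (fun t => t / h t) (𝓝[≠] 0) (𝓝 c⁻¹) := by
  have hslope := hasDerivAt_iff_tendsto_slope.mp hd
  simpa [slope_def_field, h0] using hslope.inv₀ hc

theorem zstar_div_p_tendsto_general (α : ℝ) (hα1 : α < 1) (z : ℝ → ℝ)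
    (hz : ∀ p ∈ Set.Ioo (0 : ℝ) 1,
      z p ∈ Set.Ico (0 : ℝ) 1 ∧ α * z p + log (1 - z p) = log (1 - p)) :
    Tendsto (fun p => z p / p) (nhdsWithin 0 (Set.Ioi 0)) (nhds (1 / (1 - α))) := by
  have hmem : Set.Ioo (0 : ℝ) 1 ∈ 𝓝[>] 0 := Ioo_mem_nhdsGT one_pos
  have hbound : Tendsto (fun p => -log (1 - p) / (1 - α)) (𝓝[>] 0) (𝓝 0) := by
    have : ContinuousAt (fun p => -log (1 - p) / (1 - α)) 0 :=
      ((continuousAt_const.sub continuousAt_id).log (by norm_num)).neg.div_const _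
    simpa using this.tendsto.mono_left nhdsWithin_le_nhds
  have hz0 : Tendsto z (𝓝[>] 0) (𝓝[≠] 0) := by
    refine tendsto_nhdsWithin_iff.2 ⟨tendsto_of_tendsto_of_tendsto_of_le_of_le' tendsto_const_nhds
      hbound ?_ ?_, ?_⟩ <;> filter_upwards [hmem] with p hp
    · exact (hz p hp).1.1
    · exact le_neg_log_one_sub_div hα1 (hz p hp).1.2 (hz p hp).2
    · exact ne_zero_of_add_log_eq_log hp (hz p hp).2
  have hlim := ((hasDerivAt_one_sub_mul_exp α).tendsto_self_div (by simp)
    (sub_ne_zero.2 hα1.ne')).comp hz0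
  rw [one_div]
  refine hlim.congr' ?_
  filter_upwards [hmem] with p hp
  simp only [Function.comp_apply, one_sub_mul_exp_eq hp.2 (hz p hp).1.2 (hz p hp).2]

/-- Subcritical asymptotics: if `z p ∈ [0,1)` solves `α z + log(1−z) = log(1−p)` for each
`p ∈ (0,1)`, and `0 < α < 1`, then `z p / p → 1/(1−α)` as `p → 0⁺`. -/
theorem zstar_div_p_tendsto (α : ℝ) (hα0 : 0 < α) (hα1 : α < 1) (z : ℝ → ℝ)
    (hz : ∀ p ∈ Set.Ioo (0 : ℝ) 1,
      z p ∈ Set.Ico (0 : ℝ) 1 ∧ α * z p + log (1 - z p) = log (1 - p)) :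
    Tendsto (fun p => z p / p) (nhdsWithin 0 (Set.Ioi 0)) (nhds (1 / (1 - α))) :=
  zstar_div_p_tendsto_general α hα1 z hz
end

section
/- Let (M_t)_{t≥0} be a càdlàg real-valued martingale with M₀ = 0 such that, for each bounded previsible θ with |θ_t| ≤ η, the process Z_t^θ = exp(∫₀ᵗ θ_s dM_s − ∫₀ᵗ φ(X_s, θ_s) ds) is a martingale, where φ satisfies 0 ≤ φ(x, θ) ≤ (A/2)θ² for |θ| ≤ η. Then for every t > 0 and δ ∈ (0, Aηt], one has P(sup_{s ≤ t} M_s > δ) ≤ exp(−δ²/(2At)). -/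
open MeasureTheory Real Set Filter
open scoped ENNReal NNReal

/-!
Take the exponential martingale with the Chernoff-optimal constant `ε = δ / (A t) ≤ η`. Since
`Φ ≤ A ε² / 2`, it is at least `exp (ε δ - A t ε² / 2) = exp (δ² / (2 A t))` at any time `s ≤ t`
with `M s > δ`, while its expectation stays `1`. Doob's maximal inequality along the dyadic
points of `[0, t]` bounds the probability of `M` exceeding `δ` there by `exp (-δ² / (2 A t))`,
and right-continuity of the paths passes from the dyadic points to all of `[0, t]`.
-/

namespace MeasureTheory

variable {Ω ι κ : Type*} {m0 : MeasurableSpace Ω} {μ : Measure Ω}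

def Filtration.comp [Preorder ι] [Preorder κ] (ℱ : Filtration ι m0) (τ : κ → ι)
    (hτ : Monotone τ) : Filtration κ m0 :=
  ⟨fun k => ℱ (τ k), fun _ _ hij => ℱ.mono (hτ hij), fun _ => ℱ.le _⟩

theorem Martingale.comp [Preorder ι] [Preorder κ] {ℱ : Filtration ι m0} {f : ι → Ω → ℝ}
    (hf : Martingale f ℱ μ) (τ : κ → ι) (hτ : Monotone τ) :
    Martingale (fun k => f (τ k)) (ℱ.comp τ hτ) μ :=
  ⟨fun k => hf.stronglyAdapted (τ k), fun _ _ hij => hf.2 _ _ (hτ hij)⟩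

theorem Martingale.integral_eq_of_le [Preorder ι] [IsFiniteMeasure μ] {ℱ : Filtration ι m0}
    {f : ι → Ω → ℝ} (hf : Martingale f ℱ μ) {i j : ι} (hij : i ≤ j) :
    ∫ ω, f i ω ∂μ = ∫ ω, f j ω ∂μ := by
  simpa using hf.setIntegral_eq hij MeasurableSet.univ

theorem Submartingale.measure_exists_ge_le [IsFiniteMeasure μ] {𝒢 : Filtration ℕ m0}
    {f : ℕ → Ω → ℝ} (hf : Submartingale f 𝒢 μ) (hnonneg : 0 ≤ f) {c : ℝ} (hc : 0 < c)
    (n : ℕ) : μ {ω | ∃ k ≤ n, c ≤ f k ω} ≤ ENNReal.ofReal ((∫ ω, f n ω ∂μ) / c) := by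
  set ε : ℝ≥0 := ⟨c, hc.le⟩
  have hset : {ω | ∃ k ≤ n, c ≤ f k ω} =
      {ω | (ε : ℝ) ≤ (Finset.range (n + 1)).sup' Finset.nonempty_range_add_one
        fun k => f k ω} := by
    ext ω
    simp only [mem_ofPred_eq, Finset.le_sup'_iff, Finset.mem_range, Nat.lt_succ_iff]; rfl
  have hmax : ε * μ {ω | ∃ k ≤ n, c ≤ f k ω} ≤ ENNReal.ofReal (∫ ω, f n ω ∂μ) := by
    rw [hset]
    refine (maximal_ineq hf hnonneg n).trans (ENNReal.ofReal_le_ofReal ?_)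
    exact setIntegral_le_integral (hf.integrable n) (ae_of_all μ fun ω => hnonneg n ω)
  have hε : (ε : ℝ≥0∞) = ENNReal.ofReal c := (ENNReal.ofReal_eq_coe_nnreal hc.le).symm
  rw [ENNReal.ofReal_div_of_pos hc, ENNReal.le_div_iff_mul_le
    (Or.inl (ENNReal.ofReal_pos.2 hc).ne') (Or.inl ENNReal.ofReal_ne_top), mul_comm, ← hε]
  exact hmax

end MeasureTheory

theorem intervalIntegral.integral_le_mul_sub_of_le {f : ℝ → ℝ} {a b C : ℝ} (hab : a ≤ b)
    (hC : 0 ≤ C) (hf : ∀ s ∈ Icc a b, f s ≤ C) : ∫ s in a..b, f s ≤ C * (b - a) := by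
  by_cases hint : IntervalIntegrable f volume a b
  · calc ∫ s in a..b, f s ≤ ∫ _ in a..b, C :=
          intervalIntegral.integral_mono_on hab hint intervalIntegrable_const hf
      _ = C * (b - a) := by simp [mul_comm]
  · rw [intervalIntegral.integral_undef hint]
    exact mul_nonneg hC (sub_nonneg.2 hab)

/-- The choice `ε = δ / (A t)` maximises `ε δ - A t ε² / 2`. -/
theorem sq_div_le_mul_sub_of_le {A t δ x I : ℝ} (hA : 0 < A) (ht : 0 < t) (hδ : 0 ≤ δ)
    (hx : δ ≤ x) (hI : I ≤ A / 2 * (δ / (A * t)) ^ 2 * t) :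
    δ ^ 2 / (2 * A * t) ≤ δ / (A * t) * x - I := by
  have hopt : δ / (A * t) * δ - A / 2 * (δ / (A * t)) ^ 2 * t = δ ^ 2 / (2 * A * t) := by
    field_simp; ring
  have hεx : δ / (A * t) * δ ≤ δ / (A * t) * x := by gcongr
  linarith

noncomputable def dyadicPoint (t : ℝ) (n k : ℕ) : ℝ := t * k / 2 ^ n

theorem dyadicPoint_mem_Icc {t : ℝ} (ht : 0 ≤ t) {n k : ℕ} (hk : k ≤ 2 ^ n) :
    dyadicPoint t n k ∈ Icc 0 t := by
  refine ⟨by unfold dyadicPoint; positivity, ?_⟩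
  rw [dyadicPoint, div_le_iff₀ (by positivity)]
  exact mul_le_mul_of_nonneg_left (by exact_mod_cast hk) ht

theorem monotone_dyadicPoint {t : ℝ} (ht : 0 ≤ t) (n : ℕ) : Monotone (dyadicPoint t n) :=
  fun _ _ hij => div_le_div_of_nonneg_right
    (mul_le_mul_of_nonneg_left (Nat.cast_le.2 hij) ht) (by positivity)

@[simp]
theorem dyadicPoint_two_pow (t : ℝ) (n : ℕ) : dyadicPoint t n (2 ^ n) = t := by
  simp [dyadicPoint]

theorem dyadicPoint_succ_two_mul (t : ℝ) (n k : ℕ) :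
    dyadicPoint t (n + 1) (2 * k) = dyadicPoint t n k := by
  simp only [dyadicPoint]; push_cast; ring

theorem exists_dyadicPoint_mem_Ico {s t u : ℝ} (hs : 0 ≤ s) (hst : s < t) (hsu : s < u) :
    ∃ n k : ℕ, k ≤ 2 ^ n ∧ dyadicPoint t n k ∈ Ico s u := by
  have ht : 0 < t := hs.trans_lt hst
  obtain ⟨n, hn⟩ := pow_unbounded_of_one_lt (t / (u - s)) (by norm_num : (1 : ℝ) < 2)
  have h2n : (0 : ℝ) < 2 ^ n := by positivity
  have hstep : t / 2 ^ n < u - s := by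
    rw [div_lt_iff₀ (sub_pos.2 hsu)] at hn
    rw [div_lt_iff₀ h2n]; linarith
  set k := ⌈s * 2 ^ n / t⌉₊
  have hk_ge : s * 2 ^ n / t ≤ k := Nat.le_ceil _
  have hk_lt : (k : ℝ) < s * 2 ^ n / t + 1 := Nat.ceil_lt_add_one (by positivity)
  refine ⟨n, k, Nat.ceil_le.2 ?_, ?_, ?_⟩
  · rw [div_le_iff₀ ht]; push_cast; nlinarith
  · rw [dyadicPoint, le_div_iff₀ h2n]; rw [div_le_iff₀ ht] at hk_ge; linarith
  · calc dyadicPoint t n k < t * (s * 2 ^ n / t + 1) / 2 ^ n := by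
          unfold dyadicPoint; gcongr
      _ = s + t / 2 ^ n := by field_simp
      _ < u := by linarith

theorem exists_dyadicPoint_lt_of_continuousWithinAt {f : ℝ → ℝ} {s t δ : ℝ}
    (hs : s ∈ Icc 0 t) (hf : ContinuousWithinAt f (Ici s) s) (hδ : δ < f s) :
    ∃ n k : ℕ, k ≤ 2 ^ n ∧ δ < f (dyadicPoint t n k) := by
  rcases hs.2.eq_or_lt with rfl | hst
  · exact ⟨0, 1, le_rfl, by simpa [dyadicPoint] using hδ⟩
  obtain ⟨u, hsu, hu⟩ := mem_nhdsGE_iff_exists_Ico_subset.1 (hf (Ioi_mem_nhds hδ))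
  obtain ⟨n, k, hk, hmem⟩ := exists_dyadicPoint_mem_Ico hs.1 hst hsu
  exact ⟨n, k, hk, hu hmem⟩

theorem monotone_setOf_exists_dyadicPoint {Ω : Type*} (P : Ω → ℝ → Prop) (t : ℝ) :
    Monotone fun n : ℕ => {ω | ∃ k : ℕ, k ≤ 2 ^ n ∧ P ω (dyadicPoint t n k)} := by
  refine monotone_nat_of_le_succ fun n ω ⟨k, hk, hP⟩ => ⟨2 * k, ?_, ?_⟩
  · rw [pow_succ]; omega
  · rwa [dyadicPoint_succ_two_mul]

theorem measure_exists_Icc_lt_le_iSup_dyadicPoint {Ω : Type*} {m0 : MeasurableSpace Ω}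
    (μ : Measure Ω) {X : ℝ → Ω → ℝ} (hX : ∀ ω s, ContinuousWithinAt (X · ω) (Ici s) s)
    (t δ : ℝ) :
    μ {ω | ∃ s ∈ Icc 0 t, δ < X s ω} ≤
      ⨆ n : ℕ, μ {ω | ∃ k : ℕ, k ≤ 2 ^ n ∧ δ < X (dyadicPoint t n k) ω} := by
  rw [← Monotone.measure_iUnion (monotone_setOf_exists_dyadicPoint (fun ω r => δ < X r ω) t)]
  refine measure_mono fun ω ⟨s, hs, hδ⟩ => mem_iUnion.2 ?_
  exact exists_dyadicPoint_lt_of_continuousWithinAt hs (hX ω s) hδ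

theorem exponential_martingale_bound_general
    {Ω : Type*} {m0 : MeasurableSpace Ω} (μ : Measure Ω) [IsProbabilityMeasure μ]
    (ℱ : Filtration ℝ m0) (M : ℝ → Ω → ℝ) (A η : ℝ) (hA : 0 < A)
    (Φ : ℝ → Ω → ℝ → ℝ)
    (hΦ : ∀ s ω, ∀ ϑ : ℝ, |ϑ| ≤ η → 0 ≤ Φ s ω ϑ ∧ Φ s ω ϑ ≤ A / 2 * ϑ ^ 2)
    (hM0 : ∀ ω, M 0 ω = 0)
    (hcadlag : ∀ ω, ∀ t : ℝ,
      ContinuousWithinAt (fun s => M s ω) (Ici t) t ∧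
        ∃ l : ℝ, Tendsto (fun s => M s ω) (nhdsWithin t (Iio t)) (nhds l))
    (hZ : ∀ ϑ : ℝ, |ϑ| ≤ η →
      Martingale (fun t ω => Real.exp (ϑ * M t ω - ∫ s in (0 : ℝ)..t, Φ s ω ϑ)) ℱ μ) :
    ∀ t : ℝ, 0 < t → ∀ δ : ℝ, 0 < δ → δ ≤ A * η * t →
      μ {ω | ∃ s ∈ Icc (0 : ℝ) t, M s ω > δ} ≤
        ENNReal.ofReal (Real.exp (-δ ^ 2 / (2 * A * t))) := by
  intro t ht δ hδ hδη
  set ε := δ / (A * t)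
  have hε : |ε| ≤ η := by
    rw [abs_of_nonneg (by positivity), div_le_iff₀ (by positivity)]; linarith
  set Z := fun r ω => Real.exp (ε * M r ω - ∫ s in (0 : ℝ)..r, Φ s ω ε)
  have hZε : Martingale Z ℱ μ := hZ ε hε
  set c := exp (δ ^ 2 / (2 * A * t))
  have hZ_lower : ∀ ω, ∀ r ∈ Icc 0 t, δ < M r ω → c ≤ Z r ω := by
    intro ω r hr hMr
    have hI := intervalIntegral.integral_le_mul_sub_of_le hr.1 (by positivity)
      fun s _ => (hΦ s ω ε hε).2
    refine exp_le_exp.2 (sq_div_le_mul_sub_of_le hA ht hδ.le hMr.le (hI.trans ?_))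
    rw [sub_zero]; gcongr; exact hr.2
  have hZ_integral : ∫ ω, Z t ω ∂μ = 1 := by
    rw [← hZε.integral_eq_of_le ht.le]; simp [Z, hM0]
  calc μ {ω | ∃ s ∈ Icc (0 : ℝ) t, M s ω > δ}
      ≤ ⨆ n : ℕ, μ {ω | ∃ k : ℕ, k ≤ 2 ^ n ∧ δ < M (dyadicPoint t n k) ω} :=
        measure_exists_Icc_lt_le_iSup_dyadicPoint μ (fun ω s => (hcadlag ω s).1) t δ
    _ ≤ ⨆ n : ℕ, μ {ω | ∃ k : ℕ, k ≤ 2 ^ n ∧ c ≤ Z (dyadicPoint t n k) ω} :=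
        iSup_mono fun n => measure_mono fun ω ⟨k, hk, hδk⟩ =>
          ⟨k, hk, hZ_lower ω _ (dyadicPoint_mem_Icc ht.le hk) hδk⟩
    _ ≤ ENNReal.ofReal ((∫ ω, Z t ω ∂μ) / c) := iSup_le fun n => by
        simpa using ((hZε.comp _ (monotone_dyadicPoint ht.le n)).submartingale
          ).measure_exists_ge_le (fun k ω => (exp_pos _).le) (exp_pos _) (2 ^ n)
    _ = ENNReal.ofReal (Real.exp (-δ ^ 2 / (2 * A * t))) := by
        rw [hZ_integral, one_div, ← exp_neg, neg_div]

/-- Exponential martingale bound (one-dimensional version of Proposition 5.1): let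
`(M_t)` be a càdlàg martingale with `M₀ = 0` such that for each `θ` with `|θ| ≤ η`
the process `Z_t^θ = exp(θ M_t − ∫₀ᵗ φ(X_s, θ) ds)` is a martingale, where
`0 ≤ φ ≤ (A/2)θ²` for `|θ| ≤ η`. Then for `t > 0` and `δ ∈ (0, Aηt]`,
`P(sup_{s ≤ t} M_s > δ) ≤ exp(−δ²/(2At))`. -/
theorem exponential_martingale_bound
    {Ω : Type*} {m0 : MeasurableSpace Ω} (μ : Measure Ω) [IsProbabilityMeasure μ]
    (ℱ : Filtration ℝ m0) (M : ℝ → Ω → ℝ) (A η : ℝ) (hA : 0 < A) (hη : 0 < η)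
    (Φ : ℝ → Ω → ℝ → ℝ)
    (hΦ : ∀ s ω, ∀ ϑ : ℝ, |ϑ| ≤ η → 0 ≤ Φ s ω ϑ ∧ Φ s ω ϑ ≤ A / 2 * ϑ ^ 2)
    (hM : Martingale M ℱ μ) (hM0 : ∀ ω, M 0 ω = 0)
    (hcadlag : ∀ ω, ∀ t : ℝ,
      ContinuousWithinAt (fun s => M s ω) (Ici t) t ∧
        ∃ l : ℝ, Tendsto (fun s => M s ω) (nhdsWithin t (Iio t)) (nhds l))
    (hZ : ∀ ϑ : ℝ, |ϑ| ≤ η →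
      Martingale (fun t ω => Real.exp (ϑ * M t ω - ∫ s in (0 : ℝ)..t, Φ s ω ϑ)) ℱ μ) :
    ∀ t : ℝ, 0 < t → ∀ δ : ℝ, 0 < δ → δ ≤ A * η * t →
      μ {ω | ∃ s ∈ Icc (0 : ℝ) t, M s ω > δ} ≤
        ENNReal.ofReal (Real.exp (-δ ^ 2 / (2 * A * t))) :=
  exponential_martingale_bound_general μ ℱ M A η hA Φ hΦ hM0 hcadlag hZ
end

section
/- Suppose a vertex v is identifiable in a hypergraph Λ on V. Then v ∈ V*, i.e., v is removed in any maximal sequence of permitted collapses; conversely, every vertex removed in such a sequence is identifiable. Hence V* equals the set of identifiable vertices. -/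
/-- A vertex `v` is identifiable if it belongs to some hyperedge `A` with `Λ A ≥ 1`
all of whose other vertices are identifiable in fewer steps. -/
inductive Identifiable {V : Type*} (Λ : Finset V → ℕ) : V → Prop
  | step (v : V) (A : Finset V) (hv : v ∈ A) (hA : 1 ≤ Λ A)
      (h : ∀ w ∈ A, w ≠ v → Identifiable Λ w) : Identifiable Λ v

/-!
A collapse at a patch `{w}` only merges each edge `A ∌ w` with `A ∪ {w}`, so an edge of the
collapsed hypergraph witnessing identifiability comes from an edge of `Λ`, possibly after adding
back `w`, which is itself identifiable through its patch; hence removed vertices are identifiable.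
Conversely, weight never disappears under collapses except onto removed vertices: `Λ A` is at
most the weight of `A \ l` after collapsing along `l`. If `v ∈ A`, `Λ A ≥ 1` and every other
vertex of `A` is removed but `v` is not, then `{v}` is still a patch of the final hypergraph.
-/

section

open Finset

variable {V : Type*} {Λ : Finset V → ℕ}

theorem Identifiable.of_singleton {v : V} (hv : 1 ≤ Λ {v}) : Identifiable Λ v :=
  .step v {v} (mem_singleton_self v) hv fun _ hw hne => absurd (mem_singleton.mp hw) hne

variable [DecidableEq V]

theorem Identifiable.of_collapseAt {w u : V} (hw : 1 ≤ Λ {w})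
    (h : Identifiable (collapseAt Λ w) u) : Identifiable Λ u := by
  induction h with
  | step v A hv hA _ ih =>
    have hwA : w ∉ A := fun hwA => by simp [collapseAt, hwA] at hA
    simp only [collapseAt, hwA, if_false] at hA
    by_cases hΛA : 1 ≤ Λ A
    · exact .step v A hv hΛA ih
    · refine .step v (insert w A) (mem_insert_of_mem hv) (by omega) fun x hx hxv => ?_
      rcases mem_insert.mp hx with rfl | hxA
      · exact .of_singleton hw
      · exact ih x hxA hxv

theorem IsPermittedSeq.identifiable_of_mem {l : List V} (hl : IsPermittedSeq Λ l) {v : V}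
    (hv : v ∈ l) : Identifiable Λ v := by
  induction l generalizing Λ with
  | nil => simp at hv
  | cons w l ih =>
    obtain ⟨hw, hl⟩ := hl
    rcases List.mem_cons.mp hv with rfl | hv
    · exact .of_singleton hw
    · exact .of_collapseAt hw (ih hl hv)

theorem le_collapseAt_erase (Λ : Finset V → ℕ) (w : V) (A : Finset V) :
    Λ A ≤ collapseAt Λ w (A.erase w) := by
  by_cases hwA : w ∈ A
  · simp [collapseAt, insert_erase hwA]
  · simp [collapseAt, hwA]

theorem le_collapseList_sdiff (Λ : Finset V → ℕ) (l : List V) (A : Finset V) :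
    Λ A ≤ collapseList Λ l (A \ l.toFinset) := by
  induction l generalizing Λ A with
  | nil => simp [collapseList]
  | cons w l ih =>
    calc Λ A ≤ collapseAt Λ w (A.erase w) := le_collapseAt_erase Λ w A
      _ ≤ collapseList (collapseAt Λ w) l (A.erase w \ l.toFinset) := ih _ _
      _ = collapseList Λ (w :: l) (A \ (w :: l).toFinset) := by
        rw [List.toFinset_cons, sdiff_insert, erase_sdiff_comm, collapseList]

theorem Identifiable.mem_of_isStable {l : List V} (hl : IsStable (collapseList Λ l)) {v : V}
    (hv : Identifiable Λ v) : v ∈ l := by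
  induction hv with
  | step u A hu hA _ ih =>
    by_contra hul
    have hrest : A \ l.toFinset = {u} := by
      ext x
      simp only [mem_sdiff, List.mem_toFinset, mem_singleton]
      exact ⟨fun ⟨hxA, hxl⟩ => by_contra fun hxu => hxl (ih x hxA hxu),
        by rintro rfl; exact ⟨hu, hul⟩⟩
    have hweight := le_collapseList_sdiff Λ l A
    rw [hrest, hl u] at hweight
    omega

end

theorem removed_iff_identifiable_general {V : Type*} [DecidableEq V]
    (Λ : Finset V → ℕ) (l : List V) (h : IsMaximalSeq Λ l) (v : V) :
    v ∈ l.toFinset ↔ Identifiable Λ v := by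
  rw [List.mem_toFinset]
  exact ⟨h.1.identifiable_of_mem, fun hv => hv.mem_of_isStable h.2⟩

/-- The set of vertices removed by any maximal sequence of permitted collapses is
exactly the set of identifiable vertices: `V*` equals the identifiable set. -/
theorem removed_iff_identifiable {V : Type*} [Fintype V] [DecidableEq V]
    (Λ : Finset V → ℕ) (l : List V) (h : IsMaximalSeq Λ l) (v : V) :
    v ∈ l.toFinset ↔ Identifiable Λ v :=
  removed_iff_identifiable_general Λ l h v
end
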